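/- arXiv:1708.07657 — 2 statements merged into one kernel-verified Lean document; each statement's English description precedes it below -/
import Mathlib

section
/- Let C, t > 0 and let k ≥ 2 be an integer. There exists a constant ζ > 0, depending only on C, t, k, r and q, such that for every Borel probability measure ν on ℝ^q whose support is compact of diameter at most 1 and which satisfies ν(B(x,ε)) ≤ C·ε^t for all x ∈ ℝ^q and all ε > 0, one has e_{k-1,r}(ν)^r − e_{k,r}(ν)^r ≥ ζ. -/
open MeasureTheory Metric Set

noncomputable section

variable {E : Type*} [NormedAddCommGroup E] [NormedSpace ℝ E]
  [MeasurableSpace E] [BorelSpace E]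

/-- The (topological) support of a Borel measure: the set of points all of whose
neighborhoods have positive measure. -/
def msupp (μ : Measure E) : Set E := {x | ∀ ε : ℝ, 0 < ε → 0 < μ (ball x ε)}

/-- The set of achievable quantization integrals `∫ d(x,α)^r dν` over sets `α` with
`1 ≤ card α ≤ n`. -/
def quantSet (ν : Measure E) (r : ℝ) (n : ℕ) : Set ℝ :=
  {I | ∃ α : Finset E, α.Nonempty ∧ α.card ≤ n ∧ I = ∫ x, infDist x (α : Set E) ^ r ∂ν}

/-- The `n`-th quantization error of order `r`, raised to the power `r`:
`e_{n,r}(ν)^r = inf { ∫ d(x,α)^r dν : 1 ≤ card α ≤ n }`. -/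
def quantErrPow (ν : Measure E) (r : ℝ) (n : ℕ) : ℝ := sInf (quantSet ν r n)

/-- `α` is an `n`-optimal set for `ν` of order `r`. -/
def IsOptimalSet (ν : Measure E) (r : ℝ) (n : ℕ) (α : Finset E) : Prop :=
  α.Nonempty ∧ α.card ≤ n ∧ (∫ x, infDist x (α : Set E) ^ r ∂ν) = quantErrPow ν r n

/-- `P` is a Voronoi partition (into Borel sets) with respect to the finite set `α`. -/
def IsVoronoiPartition (α : Finset E) (P : E → Set E) : Prop :=
  (∀ a ∈ α, MeasurableSet (P a)) ∧
  ((⋃ a ∈ α, P a) = univ) ∧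
  (∀ a ∈ α, ∀ b ∈ α, a ≠ b → Disjoint (P a) (P b)) ∧
  (∀ a ∈ α, {x | dist x a < infDist x ((α : Set E) \ {a})} ⊆ P a) ∧
  (∀ a ∈ α, P a ⊆ {x | dist x a = infDist x (α : Set E)})

/-- `I_a(α,ν) = ∫_{P_a(α)} d(x,α)^r dν`. -/
def voronoiI (ν : Measure E) (r : ℝ) (α : Finset E) (P : E → Set E) (a : E) : ℝ :=
  ∫ x in P a, infDist x (α : Set E) ^ r ∂ν

/-- `μ` is `s0`-dimensional Ahlfors–David regular with constants `ε0, C1, C2`, together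
with the global upper bound (valid for all centers and radii). -/
def IsAhlfors (μ : Measure E) (s0 ε0 C1 C2 : ℝ) : Prop :=
  0 < s0 ∧ 0 < ε0 ∧ 0 < C1 ∧ 0 < C2 ∧
  (∀ x ∈ msupp μ, ∀ ε : ℝ, 0 < ε → ε < ε0 →
    ENNReal.ofReal (C1 * ε ^ s0) ≤ μ (closedBall x ε) ∧
    μ (closedBall x ε) ≤ ENNReal.ofReal (C2 * ε ^ s0)) ∧
  (∀ x : E, ∀ ε : ℝ, 0 < ε → μ (closedBall x ε) ≤ ENNReal.ofReal (C2 * ε ^ s0))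

/-- `h` is a similitude of ratio `ρ`. -/
def IsSimilitude (h : E → E) (ρ : ℝ) : Prop :=
  Function.Surjective h ∧ ∀ x y, dist (h x) (h y) = ρ * dist x y

/-- The measure `λ_B = μ(·|B) ∘ h`, i.e. `λ_B(A) = μ(h(A) ∩ B)/μ(B)`. -/
def condPull (μ : Measure E) (B : Set E) (h : E → E) : Measure E :=
  Measure.comap h (ProbabilityTheory.cond μ B)

/-- There exist `j` pairwise disjoint closed balls of radius `ρ` centered in `K`. -/
def PackingNum (K : Set E) (ρ : ℝ) (j : ℕ) : Prop :=
  ∃ c : Fin j → E, (∀ i, c i ∈ K) ∧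
    Pairwise fun i i' => Disjoint (closedBall (c i) ρ) (closedBall (c i') ρ)

end

/-!
For `α` with at most `k - 1` points, the balls `B(a, ε)`, `a ∈ α`, carry ν-mass at most
`(k - 1) C ε^t ≤ 1/2` once `ε` is small in terms of `C, t, k` only, so at least half of the mass
lies at distance `> ε` from `α`. The support sits in a ball of radius `1`, which is covered by
`N` translates of a fixed cover of the unit ball by balls of radius `ε / 2`, with `N` depending
only on `ε` and the space. One of these balls `B(b, ε / 2)` carries far mass at least `1 / (2N)`,
and adding `b` to `α` lowers `d(x, α)^r` by at least `ε^r - (ε / 2)^r` there.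
-/

open Filter Topology

lemma exists_pos_mul_rpow_le (a : ℝ) {t b : ℝ} (ht : 0 < t) (hb : 0 < b) :
    ∃ ε > 0, a * ε ^ t ≤ b := by
  have h : Tendsto (fun ε : ℝ => a * ε ^ t) (𝓝[>] 0) (𝓝 0) := by
    simpa [Real.zero_rpow ht.ne'] using
      ((Real.continuousAt_rpow_const 0 t (Or.inr ht.le)).tendsto.const_mul a).mono_left
        nhdsWithin_le_nhds
  obtain ⟨ε, hε, hpos⟩ := ((h.eventually (ge_mem_nhds hb)).and self_mem_nhdsWithin).exists
  exact ⟨ε, hpos, hε⟩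

lemma exists_finset_forall_closedBall_subset_biUnion_ball {E : Type*}
    [SeminormedAddCommGroup E] [ProperSpace E] {R ρ : ℝ} (hR : 0 ≤ R) (hρ : 0 < ρ) :
    ∃ F : Finset E, F.Nonempty ∧ ∀ x : E, closedBall x R ⊆ ⋃ y ∈ F, ball (x + y) ρ := by
  obtain ⟨T, -, hT, hcov⟩ := finite_cover_balls_of_compact (isCompact_closedBall (0 : E) R) hρ
  have hcov' : ∀ z ∈ closedBall (0 : E) R, ∃ y ∈ hT.toFinset, z ∈ ball y ρ := fun z hz => by
    simpa using hcov hz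
  refine ⟨hT.toFinset, ?_, fun x z hz => ?_⟩
  · obtain ⟨y, hy, -⟩ := hcov' 0 (mem_closedBall_self hR)
    exact ⟨y, hy⟩
  · obtain ⟨y, hy, hzy⟩ := hcov' (z - x) (by simpa [dist_eq_norm] using hz)
    refine mem_iUnion₂.2 ⟨y, hy, ?_⟩
    rwa [mem_ball, dist_eq_norm, ← sub_sub, ← dist_eq_norm]

lemma exists_measureReal_inter_ge_div_card {X ι : Type*} [MeasurableSpace X] {μ : Measure X}
    [IsFiniteMeasure μ] {F : Finset ι} (hF : F.Nonempty) {U : ι → Set X}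
    (hU : ∀ᵐ x ∂μ, x ∈ ⋃ i ∈ F, U i) (S : Set X) :
    ∃ i ∈ F, μ.real S / F.card ≤ μ.real (S ∩ U i) := by
  refine Finset.exists_le_of_le_expect hF ?_
  rw [Finset.expect_eq_sum_div_card]
  gcongr
  calc μ.real S ≤ μ.real (⋃ i ∈ F, S ∩ U i) := by
        refine ENNReal.toReal_mono (measure_ne_top _ _) (measure_mono_ae ?_)
        filter_upwards [hU] with x hx hxS
        obtain ⟨i, hi, hxi⟩ := mem_iUnion₂.1 hx
        exact mem_iUnion₂.2 ⟨i, hi, hxS, hxi⟩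
    _ ≤ ∑ i ∈ F, μ.real (S ∩ U i) := measureReal_biUnion_finset_le F _

section MetricSpace

variable {X : Type*} [PseudoMetricSpace X] [MeasurableSpace X] [OpensMeasurableSpace X]
  {μ : Measure X}

lemma integrable_infDist_rpow [IsFiniteMeasure μ] {s : Set X} (hs : s.Nonempty) {r : ℝ}
    (hr : 0 ≤ r) {x₀ : X} {R : ℝ} (hμ : ∀ᵐ x ∂μ, x ∈ closedBall x₀ R) :
    Integrable (fun x => infDist x s ^ r) μ := by
  obtain ⟨b, hb⟩ := hs
  refine Integrable.mono' (integrable_const ((R + dist x₀ b) ^ r))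
    ((continuous_infDist_pt s).rpow_const fun _ => Or.inr hr).aestronglyMeasurable ?_
  filter_upwards [hμ] with x hx
  rw [Real.norm_of_nonneg (Real.rpow_nonneg infDist_nonneg r)]
  refine Real.rpow_le_rpow infDist_nonneg ?_ hr
  calc infDist x s ≤ dist x b := infDist_le_dist_of_mem hb
    _ ≤ dist x x₀ + dist x₀ b := dist_triangle _ _ _
    _ ≤ R + dist x₀ b := by gcongr; exact mem_closedBall.1 hx

lemma one_sub_card_mul_le_measureReal_setOf_lt_infDist [IsProbabilityMeasure μ]
    {α : Finset X} (hα : α.Nonempty) {ε b : ℝ} (hball : ∀ a ∈ α, μ.real (closedBall a ε) ≤ b) :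
    1 - α.card * b ≤ μ.real {x | ε < infDist x (α : Set X)} := by
  have hnear : {x | infDist x (α : Set X) ≤ ε} ⊆ ⋃ a ∈ α, closedBall a ε := fun x hx => by
    obtain ⟨a, ha, hxa⟩ :=
      α.finite_toSet.isCompact.exists_infDist_eq_dist (by exact_mod_cast hα) x
    exact mem_iUnion₂.2 ⟨a, ha, by rw [mem_closedBall, ← hxa]; exact hx⟩
  have hmeas : MeasurableSet {x | infDist x (α : Set X) ≤ ε} :=
    measurableSet_le (continuous_infDist_pt _).measurable measurable_const
  calc 1 - α.card * b ≤ 1 - ∑ a ∈ α, μ.real (closedBall a ε) := by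
        gcongr
        simpa using Finset.sum_le_card_nsmul α _ b hball
    _ ≤ 1 - μ.real {x | infDist x (α : Set X) ≤ ε} := by
        gcongr
        exact (measureReal_mono hnear (measure_ne_top _ _)).trans
          (measureReal_biUnion_finset_le α _)
    _ = μ.real {x | ε < infDist x (α : Set X)} := by
        rw [← probReal_compl_eq_one_sub hmeas]
        simp only [compl_ofPred, not_le]

lemma integral_infDist_insert_rpow_add_le [IsFiniteMeasure μ] {s : Set X} (hs : s.Nonempty)
    {r : ℝ} (hr : 0 ≤ r) (hint : Integrable (fun x => infDist x s ^ r) μ) (b : X) {ε : ℝ}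
    (hε : 0 ≤ ε) (ρ : ℝ) :
    ∫ x, infDist x (insert b s) ^ r ∂μ + μ.real ({x | ε < infDist x s} ∩ ball b ρ) * (ε ^ r - ρ ^ r)
      ≤ ∫ x, infDist x s ^ r ∂μ := by
  set T := {x | ε < infDist x s} ∩ ball b ρ
  have hT : MeasurableSet T :=
    ((isOpen_lt continuous_const (continuous_infDist_pt s)).inter isOpen_ball).measurableSet
  have hle : ∀ x, infDist x (insert b s) ^ r ≤ infDist x s ^ r := fun x =>
    Real.rpow_le_rpow infDist_nonneg (infDist_le_infDist_of_subset (subset_insert b s) hs) hr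
  have hint' : Integrable (fun x => infDist x (insert b s) ^ r) μ :=
    hint.mono ((continuous_infDist_pt _).rpow_const fun _ => Or.inr hr).aestronglyMeasurable
      (ae_of_all _ fun x => by
        simpa only [Real.norm_of_nonneg (Real.rpow_nonneg infDist_nonneg r)] using hle x)
  have hgain : ∀ x ∈ T, ε ^ r - ρ ^ r ≤ infDist x s ^ r - infDist x (insert b s) ^ r := by
    rintro x ⟨hxs, hxb⟩
    have hfar : ε ^ r ≤ infDist x s ^ r := Real.rpow_le_rpow hε (le_of_lt hxs) hr
    have hnear : infDist x (insert b s) ^ r ≤ ρ ^ r :=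
      Real.rpow_le_rpow infDist_nonneg
        ((infDist_le_dist_of_mem (mem_insert b s)).trans (mem_ball.1 hxb).le) hr
    linarith
  calc ∫ x, infDist x (insert b s) ^ r ∂μ + μ.real T * (ε ^ r - ρ ^ r)
      ≤ ∫ x, infDist x (insert b s) ^ r ∂μ
          + ∫ x in T, (infDist x s ^ r - infDist x (insert b s) ^ r) ∂μ := by
        gcongr
        exact setIntegral_ge_of_const_le hT (measure_ne_top μ T) hgain (hint.sub hint').integrableOn
    _ ≤ ∫ x, infDist x (insert b s) ^ r ∂μ
          + ∫ x, (infDist x s ^ r - infDist x (insert b s) ^ r) ∂μ :=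
        (add_le_add_iff_left _).2
          (setIntegral_le_integral (hint.sub hint') (ae_of_all _ fun x => sub_nonneg.2 (hle x)))
    _ = ∫ x, infDist x s ^ r ∂μ := by rw [integral_sub hint hint']; ring

end MetricSpace

section NormedSpace

variable {E : Type*} [NormedAddCommGroup E] [MeasurableSpace E]

lemma msupp_eq_support (μ : Measure E) : msupp μ = μ.support := by
  ext x
  exact nhds_basis_ball.mem_measureSupport.symm

lemma exists_ae_mem_closedBall_of_diam_msupp_le [SecondCountableTopology E] {μ : Measure E}
    [NeZero μ] {R : ℝ} (hb : Bornology.IsBounded (msupp μ)) (hR : diam (msupp μ) ≤ R) :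
    ∃ x₀, ∀ᵐ x ∂μ, x ∈ closedBall x₀ R := by
  have hae : ∀ᵐ x ∂μ, x ∈ msupp μ := by rw [msupp_eq_support]; exact Measure.support_mem_ae
  obtain ⟨x₀, hx₀⟩ := hae.exists
  exact ⟨x₀, hae.mono fun x hx => mem_closedBall.2 ((dist_le_diam_of_mem hb hx hx₀).trans hR)⟩

lemma le_quantErrPow_sub_quantErrPow {ν : Measure E} {r ζ : ℝ} {n m : ℕ} (hn : 1 ≤ n)
    (h : ∀ α : Finset E, α.Nonempty → α.card ≤ n → ∃ β : Finset E, β.Nonempty ∧ β.card ≤ m ∧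
      ∫ x, infDist x (β : Set E) ^ r ∂ν + ζ ≤ ∫ x, infDist x (α : Set E) ^ r ∂ν) :
    ζ ≤ quantErrPow ν r n - quantErrPow ν r m := by
  have hbdd : BddBelow (quantSet ν r m) := ⟨0, by
    rintro _ ⟨β, -, -, rfl⟩
    exact integral_nonneg fun x => Real.rpow_nonneg infDist_nonneg r⟩
  have hne : (quantSet ν r n).Nonempty := ⟨_, {0}, Finset.singleton_nonempty 0, by simpa, rfl⟩
  have : quantErrPow ν r m + ζ ≤ quantErrPow ν r n := by
    refine le_csInf hne ?_
    rintro _ ⟨α, hα, hcard, rfl⟩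
    obtain ⟨β, hβ, hβcard, hle⟩ := h α hα hcard
    linarith [show quantErrPow ν r m ≤ _ from csInf_le hbdd ⟨β, hβ, hβcard, rfl⟩]
  linarith

end NormedSpace

/-- For `C, t > 0` and an integer `k ≥ 2` there is `ζ > 0` (depending only on
`C, t, k, r` and the space) such that every Borel probability measure `ν` with compact support
of diameter at most `1` satisfying `ν(B(x,ε)) ≤ C·ε^t` for all `x, ε > 0` has
`e_{k-1,r}(ν)^r − e_{k,r}(ν)^r ≥ ζ`. -/
theorem stmt6 {E : Type*} [NormedAddCommGroup E] [NormedSpace ℝ E]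
    [MeasurableSpace E] [BorelSpace E] [FiniteDimensional ℝ E]
    (r : ℝ) (hr : 0 < r)
    (C t : ℝ) (hC : 0 < C) (ht : 0 < t) (k : ℕ) (hk : 2 ≤ k) :
    ∃ ζ : ℝ, 0 < ζ ∧
      ∀ ν : MeasureTheory.Measure E, MeasureTheory.IsProbabilityMeasure ν →
        IsCompact (msupp ν) → Metric.diam (msupp ν) ≤ 1 →
        (∀ x : E, ∀ ε : ℝ, 0 < ε →
          ν (Metric.closedBall x ε) ≤ ENNReal.ofReal (C * ε ^ t)) →
        ζ ≤ quantErrPow ν r (k - 1) - quantErrPow ν r k := by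
  classical
  obtain ⟨ε, hε, hsmall⟩ := exists_pos_mul_rpow_le (k * C) ht (one_half_pos (α := ℝ))
  obtain ⟨F, hF, hcov⟩ :=
    exists_finset_forall_closedBall_subset_biUnion_ball (E := E) zero_le_one (half_pos hε)
  have hgap : 0 < ε ^ r - (ε / 2) ^ r :=
    sub_pos.2 (Real.rpow_lt_rpow (half_pos hε).le (half_lt_self hε) hr)
  have hN : (0 : ℝ) < F.card := by exact_mod_cast hF.card_pos
  refine ⟨(ε ^ r - (ε / 2) ^ r) * (1 / 2 / F.card), by positivity, ?_⟩
  intro ν hν hcomp hdiam hball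
  obtain ⟨x₀, hx₀⟩ := exists_ae_mem_closedBall_of_diam_msupp_le hcomp.isBounded hdiam
  refine le_quantErrPow_sub_quantErrPow (by omega) fun α hα hcard => ?_
  have hfar : 1 / 2 ≤ ν.real {x | ε < infDist x (α : Set E)} :=
    calc 1 / 2 ≤ 1 - k * (C * ε ^ t) := by rw [← mul_assoc]; linarith
      _ ≤ 1 - α.card * (C * ε ^ t) := by
        gcongr
        exact_mod_cast hcard.trans (Nat.sub_le k 1)
      _ ≤ _ := one_sub_card_mul_le_measureReal_setOf_lt_infDist hα fun a _ =>
        ENNReal.toReal_le_of_le_ofReal (by positivity) (hball a ε hε)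
  obtain ⟨y, -, hy⟩ := exists_measureReal_inter_ge_div_card hF (hx₀.mono fun x hx => hcov x₀ hx)
    {x | ε < infDist x (α : Set E)}
  refine ⟨insert (x₀ + y) α, Finset.insert_nonempty _ _,
    (Finset.card_insert_le _ _).trans (by omega), ?_⟩
  rw [Finset.coe_insert]
  calc _ + (ε ^ r - (ε / 2) ^ r) * (1 / 2 / F.card)
      ≤ _ + ν.real ({x | ε < infDist x (α : Set E)} ∩ ball (x₀ + y) (ε / 2))
          * (ε ^ r - (ε / 2) ^ r) := by
        rw [mul_comm]
        gcongr
        exact (div_le_div_of_nonneg_right hfar hN.le).trans hy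
    _ ≤ _ := integral_infDist_insert_rpow_add_le (by exact_mod_cast hα) hr.le
        (integrable_infDist_rpow (by exact_mod_cast hα) hr.le hx₀) (x₀ + y) hε.le (ε / 2)
end

section
/- For each integer j ≥ 2 there exists a constant ζ_j > 0, depending only on C1, C2, s0, r, q and j (in particular independent of k and of the center), such that for every k ≥ k0, every x ∈ K, and every radius ρ with (7/8)·m^{-k} ≤ ρ ≤ (5/2)·m^{-k}, the ball B := B(x,ρ) satisfies e_{j-1,r}(λ_B)^r − e_{j,r}(λ_B)^r ≥ ζ_j. In particular, for every σ ∈ Ω_k this holds for each of the four balls B(c_σ,(7/8)m^{-k}), E_σ = B(c_σ,m^{-k}), B(c_σ,(9/8)m^{-k}) and B(c_σ,(5/2)m^{-k}). -/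
/-!
By Ahlfors regularity, every ball `B = B(x, ρ)` centred in the support contains `j` points of the
support that are `8κρ` apart and whose `κρ`-balls each carry at least the fraction
`c = C1 κ ^ s0 / C2` of `μ(B)`, where `κ` and `c` depend only on `C1, C2, s0, j`. Given any
`j - 1` quantization points, one of these `j` points is `4κρ`-far from all of them; adding it
brings the distance on its `κρ`-ball down from `≥ 3κρ` to `≤ κρ`, a gain of at least
`(3 ^ r - 1) (κρ) ^ r c` for `μ(·|B)`. Finally `λ_B` is the pull-back of `μ(·|B)` by a similitude
of ratio `diam B = 2ρ`, which divides every quantization error by `(2ρ) ^ r`.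
-/

open MeasureTheory Metric Set

open Filter Topology ProbabilityTheory
open scoped ENNReal Pointwise

section Metric

variable {X : Type*} [PseudoMetricSpace X] {r : ℝ}

lemma Finset.exists_forall_le_dist_of_card_lt {Z α : Finset X} (hcard : α.card < Z.card) {s : ℝ}
    (hsep : (Z : Set X).Pairwise fun a b => 2 * s ≤ dist a b) :
    ∃ z ∈ Z, ∀ a ∈ α, s ≤ dist z a := by
  by_contra! hclose
  choose! f hfα hf using hclose
  obtain ⟨z, hz, z', hz', hne, hzz'⟩ := Finset.exists_ne_map_eq_of_card_lt_of_maps_to hcard hfα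
  have := hsep hz hz' hne
  linarith [dist_triangle_right z z' (f z), hf z hz, hzz' ▸ hf z' hz']

lemma le_infDist_rpow_sub_infDist_insert_rpow (hr : 0 ≤ r) {α : Set X} (hα : α.Nonempty)
    {z w : X} {t : ℝ} (ht : 0 ≤ t) (hfar : ∀ a ∈ α, 4 * t ≤ dist z a) (hw : w ∈ closedBall z t) :
    ((3 : ℝ) ^ r - 1) * t ^ r ≤ infDist w α ^ r - infDist w (insert z α) ^ r := by
  have hfar' : 3 * t ≤ infDist w α := (le_infDist hα).2 fun a ha => by
    linarith [hfar a ha, dist_triangle_left z a w, mem_closedBall.1 hw]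
  have hnear : infDist w (insert z α) ≤ t := (infDist_le_dist_of_mem (mem_insert z α)).trans hw
  have h3 : (3 * t) ^ r ≤ infDist w α ^ r := Real.rpow_le_rpow (by positivity) hfar' hr
  have h1 : infDist w (insert z α) ^ r ≤ t ^ r := Real.rpow_le_rpow infDist_nonneg hnear hr
  rw [Real.mul_rpow (by norm_num) ht] at h3
  linarith

end Metric

section Quantization

variable {E : Type*} [NormedAddCommGroup E] [MeasurableSpace E] {ν : Measure E} {r : ℝ}

lemma quantSet_bddBelow (ν : Measure E) (r : ℝ) (n : ℕ) : BddBelow (quantSet ν r n) := by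
  refine ⟨0, ?_⟩
  rintro _ ⟨α, -, -, rfl⟩
  exact integral_nonneg fun w => Real.rpow_nonneg infDist_nonneg r

lemma quantErrPow_le_integral {n : ℕ} {α : Finset E} (hα : α.Nonempty) (hcard : α.card ≤ n) :
    quantErrPow ν r n ≤ ∫ w, infDist w (α : Set E) ^ r ∂ν :=
  csInf_le (quantSet_bddBelow ν r n) ⟨α, hα, hcard, rfl⟩

lemma integrable_infDist_rpow_s10 [OpensMeasurableSpace E] [IsFiniteMeasure ν] (hr : 0 ≤ r)
    {z : E} {R : ℝ} (hν : ∀ᵐ w ∂ν, w ∈ closedBall z R) {α : Finset E} (hα : α.Nonempty) :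
    Integrable (fun w => infDist w (α : Set E) ^ r) ν := by
  obtain ⟨a, ha⟩ := hα
  refine Integrable.mono' (integrable_const ((R + dist z a) ^ r))
    ((continuous_infDist_pt _).rpow_const fun _ => Or.inr hr).aestronglyMeasurable ?_
  filter_upwards [hν] with w hw
  rw [Real.norm_of_nonneg (Real.rpow_nonneg infDist_nonneg r)]
  refine Real.rpow_le_rpow infDist_nonneg ?_ hr
  calc infDist w (α : Set E) ≤ dist w a := infDist_le_dist_of_mem (Finset.mem_coe.2 ha)
    _ ≤ dist w z + dist z a := dist_triangle _ _ _
    _ ≤ R + dist z a := by gcongr; exact mem_closedBall.1 hw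

lemma quantErrPow_succ_add_le [OpensMeasurableSpace E] [IsFiniteMeasure ν] (hr : 0 < r)
    {z₀ : E} {R : ℝ} (hν : ∀ᵐ w ∂ν, w ∈ closedBall z₀ R) {n : ℕ} (hn : 1 ≤ n)
    {Z : Finset E} (hZ : Z.card = n + 1) {t c : ℝ} (ht : 0 ≤ t)
    (hsep : (Z : Set E).Pairwise fun a b => 8 * t ≤ dist a b)
    (hmass : ∀ z ∈ Z, c ≤ ν.real (closedBall z t)) :
    quantErrPow ν r (n + 1) + ((3 : ℝ) ^ r - 1) * t ^ r * c ≤ quantErrPow ν r n := by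
  classical
  refine le_csInf ⟨_, {z₀}, Finset.singleton_nonempty _, by simpa using hn, rfl⟩ ?_
  rintro _ ⟨α, hα, hcard, rfl⟩
  obtain ⟨z, hz, hfar⟩ := Z.exists_forall_le_dist_of_card_lt (s := 4 * t)
    (hcard.trans_lt (by omega)) fun a ha b hb hab => by linarith [hsep ha hb hab]
  set β := insert z α
  have hβ : β.Nonempty := Finset.insert_nonempty z α
  have hgain : ∀ w ∈ closedBall z t,
      ((3 : ℝ) ^ r - 1) * t ^ r ≤ infDist w α ^ r - infDist w β ^ r := fun w hw => by
    simpa only [β, Finset.coe_insert] using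
      le_infDist_rpow_sub_infDist_insert_rpow hr.le (Finset.coe_nonempty.2 hα) ht hfar hw
  have hint := integrable_infDist_rpow_s10 hr.le hν hα
  have hint' := integrable_infDist_rpow_s10 hr.le hν hβ
  have h3r : 0 ≤ (3 : ℝ) ^ r - 1 := by linarith [Real.one_le_rpow (by norm_num : (1 : ℝ) ≤ 3) hr.le]
  calc quantErrPow ν r (n + 1) + ((3 : ℝ) ^ r - 1) * t ^ r * c
      ≤ ∫ w, infDist w β ^ r ∂ν + ((3 : ℝ) ^ r - 1) * t ^ r * ν.real (closedBall z t) :=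
        add_le_add (quantErrPow_le_integral hβ ((Finset.card_insert_le z α).trans (by omega)))
          (mul_le_mul_of_nonneg_left (hmass z hz) (mul_nonneg h3r (Real.rpow_nonneg ht r)))
    _ ≤ ∫ w, infDist w β ^ r ∂ν + ∫ w in closedBall z t, infDist w α ^ r - infDist w β ^ r ∂ν := by
        gcongr
        exact setIntegral_ge_of_const_le_real measurableSet_closedBall (measure_ne_top ν _)
          hgain (hint.sub hint').integrableOn
    _ ≤ ∫ w, infDist w β ^ r ∂ν + ∫ w, infDist w α ^ r - infDist w β ^ r ∂ν := by
        refine add_le_add le_rfl (setIntegral_le_integral (hint.sub hint')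
          (Eventually.of_forall fun w => sub_nonneg.2 ?_))
        exact Real.rpow_le_rpow infDist_nonneg (infDist_le_infDist_of_subset
          (by simp [β, Set.subset_insert]) (Finset.coe_nonempty.2 hα)) hr.le
    _ = ∫ w, infDist w α ^ r ∂ν := by rw [integral_sub hint hint']; ring

end Quantization

section Similitude

variable {E : Type*} [NormedAddCommGroup E] [NormedSpace ℝ E] {h : E → E} {D : ℝ}

lemma IsSimilitude.exists_isometryEquiv (hh : IsSimilitude h D) (hD : 0 < D) :
    ∃ g : E ≃ᵢ E, ∀ x, h x = D • g x := by
  have hg : Isometry fun x => D⁻¹ • h x := Isometry.of_dist_eq fun x y => by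
    rw [dist_smul₀, hh.2, Real.norm_of_nonneg (inv_nonneg.2 hD.le), inv_mul_cancel_left₀ hD.ne']
  have hsurj : Function.Surjective fun x => D⁻¹ • h x := fun y =>
    (hh.1 (D • y)).imp fun x hx => by simp [hx, hD.ne']
  exact ⟨IsometryEquiv.mk' (fun x => D⁻¹ • h x) (Function.surjInv hsurj)
      (Function.rightInverse_surjInv hsurj) hg,
    fun x => by simp [IsometryEquiv.mk', hD.ne']⟩

lemma IsSimilitude.exists_homeomorph_infDist_image (hh : IsSimilitude h D) (hD : 0 < D) :
    ∃ e : E ≃ₜ E, ⇑e = h ∧ ∀ x (s : Set E), infDist (e x) (e '' s) = D * infDist x s := by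
  obtain ⟨g, hg⟩ := hh.exists_isometryEquiv hD
  refine ⟨g.toHomeomorph.trans (Homeomorph.smulOfNeZero D hD.ne'), funext fun x => (hg x).symm,
    fun x s => ?_⟩
  change infDist (D • g x) ((fun y => D • g y) '' s) = _
  rw [← Set.image_image (D • ·) g, Set.image_smul, infDist_smul₀ hD.ne', infDist_image g.isometry,
    Real.norm_of_nonneg hD.le]

lemma quantErrPow_comap_of_isSimilitude [MeasurableSpace E] [BorelSpace E]
    (hh : IsSimilitude h D) (hD : 0 < D) (ν : Measure E) (r : ℝ) (n : ℕ) :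
    quantErrPow (ν.comap h) r n = (D ^ r)⁻¹ * quantErrPow ν r n := by
  classical
  obtain ⟨e, rfl, he⟩ := hh.exists_homeomorph_infDist_image hD
  have hcomap : ν.comap e = ν.map e.symm := by
    simpa using (e.toMeasurableEquiv.map_symm (μ := ν)).symm
  have hint : ∀ α : Finset E, ∫ w, infDist w α ^ r ∂(ν.comap e)
      = (D ^ r)⁻¹ * ∫ v, infDist v (α.image e : Finset E) ^ r ∂ν := by
    intro α
    rw [← integral_const_mul, hcomap, ← e.toMeasurableEquiv_symm_coe, integral_map_equiv]
    congr 1 with v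
    rw [Finset.coe_image, ← e.apply_symm_apply v, he, e.apply_symm_apply,
      Real.mul_rpow hD.le infDist_nonneg, ← mul_assoc, inv_mul_cancel₀ (by positivity), one_mul]
    rfl
  have hset : quantSet (ν.comap e) r n = (D ^ r)⁻¹ • quantSet ν r n := by
    ext I
    simp only [quantSet, Set.mem_smul_set, smul_eq_mul]
    constructor
    · rintro ⟨α, hα, hcard, rfl⟩
      exact ⟨_, ⟨α.image e, hα.image _, Finset.card_image_le.trans hcard, rfl⟩, (hint α).symm⟩
    · rintro ⟨_, ⟨β, hβ, hcard, rfl⟩, rfl⟩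
      refine ⟨β.image e.symm, hβ.image _, Finset.card_image_le.trans hcard, ?_⟩
      rw [hint, Finset.image_image, e.self_comp_symm, Finset.image_id]
  rw [quantErrPow, hset, Real.sInf_smul_of_nonneg (by positivity), smul_eq_mul, quantErrPow]

end Similitude

section Support

variable {E : Type*} [NormedAddCommGroup E] [MeasurableSpace E] [SecondCountableTopology E]
  {μ : Measure E}

lemma measure_compl_msupp (μ : Measure E) : μ (msupp μ)ᶜ = 0 := by
  refine measure_null_of_locally_null _ fun x hx => ?_
  obtain ⟨ε, hε, hball⟩ : ∃ ε > 0, μ (ball x ε) = 0 := by simpa [msupp] using hx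
  exact ⟨ball x ε, mem_nhdsWithin_of_mem_nhds (ball_mem_nhds x hε), hball⟩

lemma exists_mem_msupp_of_measure_ne_zero {T : Set E} (hT : μ T ≠ 0) : ∃ y ∈ T, y ∈ msupp μ := by
  by_contra! h
  exact hT (measure_mono_null h (measure_compl_msupp μ))

lemma exists_mem_msupp_forall_le_dist {S : Set E} {d : ℝ} {M : ℝ≥0∞}
    (hM : ∀ z, μ (ball z d) ≤ M) (Z : Finset E) (hS : Z.card * M < μ S) :
    ∃ y ∈ S ∩ msupp μ, ∀ z ∈ Z, d ≤ dist y z := by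
  set U := ⋃ z ∈ Z, ball z d
  have hU : μ U ≤ Z.card * M := (measure_biUnion_finset_le Z _).trans <| by
    simpa using Finset.sum_le_card_nsmul Z _ M fun z _ => hM z
  have hSU : μ (S \ U) ≠ 0 := fun h0 => hS.not_ge <| calc
    μ S ≤ μ (S ∩ U) + μ (S \ U) := measure_le_inter_add_sdiff μ S U
    _ ≤ Z.card * M := by rw [h0, add_zero]; exact (measure_mono inter_subset_right).trans hU
  obtain ⟨y, ⟨hyS, hyU⟩, hy⟩ := exists_mem_msupp_of_measure_ne_zero hSU
  exact ⟨y, ⟨hyS, hy⟩, fun z hz => not_lt.1 fun hlt => hyU (mem_biUnion hz (mem_ball.2 hlt))⟩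

lemma exists_finset_card_eq_pairwise_le_dist {S : Set E} {d : ℝ} (hd : 0 < d) {M : ℝ≥0∞}
    (hM : ∀ z, μ (ball z d) ≤ M) (n : ℕ) (hS : n * M < μ S) :
    ∃ Z : Finset E, Z.card = n + 1 ∧ ↑Z ⊆ S ∩ msupp μ ∧
      (Z : Set E).Pairwise fun a b => d ≤ dist a b := by
  classical
  induction n with
  | zero =>
    obtain ⟨y, hy, -⟩ := exists_mem_msupp_forall_le_dist hM ∅ (by simpa using hS)
    exact ⟨{y}, rfl, by simpa using hy, by simp⟩
  | succ n ih =>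
    obtain ⟨Z, hZ, hZS, hZsep⟩ := ih <| hS.trans_le' <| by gcongr; simp
    obtain ⟨y, hy, hyZ⟩ := exists_mem_msupp_forall_le_dist hM Z (by rwa [hZ])
    have hyZ' : y ∉ Z := fun h => (hyZ y h).not_gt (by simpa using hd)
    refine ⟨insert y Z, by rw [Finset.card_insert_of_notMem hyZ', hZ], ?_, ?_⟩
    · rw [Finset.coe_insert, Set.insert_subset_iff]
      exact ⟨hy, hZS⟩
    · rw [Finset.coe_insert, Set.pairwise_insert]
      exact ⟨hZsep, fun b hb _ => ⟨hyZ b hb, dist_comm y b ▸ hyZ b hb⟩⟩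

end Support

section Ahlfors

variable {E : Type*} [NormedAddCommGroup E] [MeasurableSpace E] {μ : Measure E}
  {s0 ε0 C1 C2 : ℝ}

lemma IsAhlfors.le_measure_closedBall (hμ : IsAhlfors μ s0 ε0 C1 C2) {x : E} (hx : x ∈ msupp μ)
    {ε : ℝ} (hε : 0 < ε) (hε0 : ε < ε0) : ENNReal.ofReal (C1 * ε ^ s0) ≤ μ (closedBall x ε) :=
  (hμ.2.2.2.2.1 x hx ε hε hε0).1

lemma IsAhlfors.measure_closedBall_le (hμ : IsAhlfors μ s0 ε0 C1 C2) (x : E) {ε : ℝ}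
    (hε : 0 < ε) : μ (closedBall x ε) ≤ ENNReal.ofReal (C2 * ε ^ s0) :=
  hμ.2.2.2.2.2 x ε hε

lemma IsAhlfors.exists_finset_separated [SecondCountableTopology E]
    (hμ : IsAhlfors μ s0 ε0 C1 C2) {x : E} (hx : x ∈ msupp μ) {R d : ℝ} (hR : 0 < R)
    (hRε : R < ε0) (hd : 0 < d) {n : ℕ} (hn : n * (C2 * d ^ s0) < C1 * R ^ s0) :
    ∃ Z : Finset E, Z.card = n + 1 ∧ ↑Z ⊆ closedBall x R ∩ msupp μ ∧
      (Z : Set E).Pairwise fun a b => d ≤ dist a b := by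
  refine exists_finset_card_eq_pairwise_le_dist hd
    (fun z => (measure_mono ball_subset_closedBall).trans (hμ.measure_closedBall_le z hd)) n ?_
  have hC1 : 0 < C1 * R ^ s0 := mul_pos hμ.2.2.1 (Real.rpow_pos_of_pos hR s0)
  calc (n : ℝ≥0∞) * ENNReal.ofReal (C2 * d ^ s0) = ENNReal.ofReal (n * (C2 * d ^ s0)) := by
        rw [ENNReal.ofReal_mul (Nat.cast_nonneg n), ENNReal.ofReal_natCast]
    _ < ENNReal.ofReal (C1 * R ^ s0) := (ENNReal.ofReal_lt_ofReal_iff hC1).2 hn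
    _ ≤ μ (closedBall x R) := hμ.le_measure_closedBall hx hR hRε

lemma IsAhlfors.le_cond_real_closedBall [OpensMeasurableSpace E] (hμ : IsAhlfors μ s0 ε0 C1 C2)
    {x y : E} (hy : y ∈ msupp μ) {ρ κ : ℝ} (hρ : 0 < ρ) (hκ : 0 < κ) (hκρ : κ * ρ < ε0)
    (hsub : closedBall y (κ * ρ) ⊆ closedBall x ρ) :
    C1 / C2 * κ ^ s0 ≤ (μ[|closedBall x ρ]).real (closedBall y (κ * ρ)) := by
  have hC1 := hμ.2.2.1
  have hC2 := hμ.2.2.2.1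
  have hB := hμ.measure_closedBall_le x hρ
  have hBfin : μ (closedBall x ρ) ≠ ∞ := ne_top_of_le_ne_top ENNReal.ofReal_ne_top hB
  have hlow : C1 * (κ * ρ) ^ s0 ≤ μ.real (closedBall y (κ * ρ)) :=
    (ENNReal.ofReal_le_iff_le_toReal (ne_top_of_le_ne_top hBfin (measure_mono hsub))).1
      (hμ.le_measure_closedBall hy (by positivity) hκρ)
  have hup : μ.real (closedBall x ρ) ≤ C2 * ρ ^ s0 :=
    ENNReal.toReal_le_of_le_ofReal (by positivity) hB
  have hpos : 0 < μ.real (closedBall x ρ) :=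
    (hlow.trans (measureReal_mono hsub hBfin)).trans_lt' (by positivity)
  rw [measureReal_def, cond_apply measurableSet_closedBall, inter_eq_self_of_subset_right hsub,
    ENNReal.toReal_mul, ENNReal.toReal_inv, ← div_eq_inv_mul, ← measureReal_def,
    ← measureReal_def]
  calc C1 / C2 * κ ^ s0 = C1 * (κ * ρ) ^ s0 / (C2 * ρ ^ s0) := by
        rw [Real.mul_rpow hκ.le hρ.le]; field_simp
    _ ≤ μ.real (closedBall y (κ * ρ)) / μ.real (closedBall x ρ) :=
        div_le_div₀ (by positivity) hlow hpos hup

lemma IsAhlfors.exists_separated_finset_le_cond [SecondCountableTopology E]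
    [OpensMeasurableSpace E] (hμ : IsAhlfors μ s0 ε0 C1 C2) (n : ℕ) :
    ∃ κ > 0, ∀ x ∈ msupp μ, ∀ ρ : ℝ, 0 < ρ → ρ / 2 < ε0 →
      ∃ Z : Finset E, Z.card = n + 1 ∧ (Z : Set E).Pairwise (fun a b => 8 * (κ * ρ) ≤ dist a b) ∧
        ∀ z ∈ Z, C1 / C2 * κ ^ s0 ≤ (μ[|closedBall x ρ]).real (closedBall z (κ * ρ)) := by
  have hs0 := hμ.1
  have hC1 := hμ.2.2.1
  obtain ⟨κ, ⟨hκn, hκ2⟩, hκ⟩ : ∃ κ : ℝ, (n * (C2 * (16 * κ) ^ s0) < C1 ∧ κ ≤ 1 / 2) ∧ 0 < κ := by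
    have hlim : Tendsto (fun κ : ℝ => n * (C2 * (16 * κ) ^ s0)) (𝓝 0) (𝓝 0) := by
      simpa [Real.zero_rpow hs0.ne'] using
        (((continuous_const.mul continuous_id).rpow_const fun _ => Or.inr hs0.le).tendsto
          (0 : ℝ) |>.const_mul C2).const_mul (n : ℝ)
    exact ((hlim.eventually (gt_mem_nhds hC1)).and (eventually_le_nhds (by norm_num))
      |>.filter_mono nhdsWithin_le_nhds |>.and self_mem_nhdsWithin).exists (f := 𝓝[>] 0)
  refine ⟨κ, hκ, fun x hx ρ hρ hρε => ?_⟩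
  obtain ⟨Z, hZ, hZsub, hZsep⟩ := hμ.exists_finset_separated hx (half_pos hρ) hρε
    (d := 8 * (κ * ρ)) (by positivity) (n := n) <| by
      rw [show 8 * (κ * ρ) = 16 * κ * (ρ / 2) by ring,
        Real.mul_rpow (by positivity) (by positivity)]
      calc _ = n * (C2 * (16 * κ) ^ s0) * (ρ / 2) ^ s0 := by ring
        _ < C1 * (ρ / 2) ^ s0 := mul_lt_mul_of_pos_right hκn (by positivity)
  refine ⟨Z, hZ, hZsep, fun z hz => hμ.le_cond_real_closedBall (hZsub hz).2 hρ hκ (by nlinarith)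
    (closedBall_subset_closedBall' (by nlinarith [mem_closedBall.1 (hZsub hz).1]))⟩

end Ahlfors

theorem stmt10_general {E : Type*} [NormedAddCommGroup E] [NormedSpace ℝ E]
    [MeasurableSpace E] [BorelSpace E] [FiniteDimensional ℝ E]
    (r : ℝ) (hr : 0 < r)
    (μ : MeasureTheory.Measure E)
    (s0 ε0 C1 C2 : ℝ) (hμ : IsAhlfors μ s0 ε0 C1 C2)
    (m : ℕ) (hm : 2 ≤ m) (k0 : ℕ)
    (hk0 : 2 * ((m : ℝ) ^ k0)⁻¹ < ε0)
    (j : ℕ) (hj : 2 ≤ j) :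
    ∃ ζ : ℝ, 0 < ζ ∧ ∀ k : ℕ, k0 ≤ k → ∀ x ∈ msupp μ, ∀ ρ : ℝ,
      (7 / 8 : ℝ) * ((m : ℝ) ^ k)⁻¹ ≤ ρ → ρ ≤ (5 / 2 : ℝ) * ((m : ℝ) ^ k)⁻¹ →
      ∀ h : E → E, IsSimilitude h (Metric.diam (Metric.closedBall x ρ)) →
        ζ ≤ quantErrPow (condPull μ (Metric.closedBall x ρ) h) r (j - 1) -
              quantErrPow (condPull μ (Metric.closedBall x ρ) h) r j := by
  obtain ⟨n, rfl⟩ : ∃ n, j = n + 1 := ⟨j - 1, by omega⟩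
  obtain ⟨κ, hκ, hpack⟩ := hμ.exists_separated_finset_le_cond n
  have h3r : (0 : ℝ) < 3 ^ r - 1 := sub_pos.2 (Real.one_lt_rpow (by norm_num) hr)
  have hC : 0 < C1 / C2 := div_pos hμ.2.2.1 hμ.2.2.2.1
  refine ⟨(3 ^ r - 1) * (κ / 2) ^ r * (C1 / C2 * κ ^ s0), by positivity,
    fun k hk x hx ρ hρl hρu h hh => ?_⟩
  have hρ : 0 < ρ := hρl.trans_lt' (by positivity)
  have hρε : ρ / 2 < ε0 := by
    have : ((m : ℝ) ^ k)⁻¹ ≤ ((m : ℝ) ^ k0)⁻¹ :=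
      inv_anti₀ (by positivity) (pow_le_pow_right₀ (by exact_mod_cast (by omega : 1 ≤ m)) hk)
    linarith [hμ.2.1]
  obtain ⟨Z, hZ, hZsep, hZmass⟩ := hpack x hx ρ hρ hρε
  -- `diam_closedBall_eq` needs a nontrivial space; two distinct points of `Z` provide it
  have : Nontrivial E := by
    obtain ⟨a, -, b, -, hab⟩ := Finset.one_lt_card.1 (by omega : 1 < Z.card)
    exact ⟨a, b, hab⟩
  have hgain := quantErrPow_succ_add_le hr (ae_cond_mem measurableSet_closedBall)
    (by omega : 1 ≤ n) hZ (by positivity) hZsep hZmass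
  rw [diam_closedBall_eq x hρ.le] at hh
  rw [Nat.add_sub_cancel, condPull, quantErrPow_comap_of_isSimilitude hh (by positivity),
    quantErrPow_comap_of_isSimilitude hh (by positivity), ← mul_sub]
  calc (3 ^ r - 1) * (κ / 2) ^ r * (C1 / C2 * κ ^ s0)
      = ((2 * ρ) ^ r)⁻¹ * ((3 ^ r - 1) * (κ * ρ) ^ r * (C1 / C2 * κ ^ s0)) := by
        rw [Real.div_rpow hκ.le zero_le_two, Real.mul_rpow zero_le_two hρ.le,
          Real.mul_rpow hκ.le hρ.le]
        field_simp
    _ ≤ _ := by gcongr; linarith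

/-- For each integer `j ≥ 2` there is `ζ_j > 0` (independent of `k` and of the
center) such that for every `k ≥ k0`, every `x ∈ K = supp μ` and every radius `ρ` with
`(7/8)·m^{-k} ≤ ρ ≤ (5/2)·m^{-k}`, the ball `B = B(x,ρ)` satisfies
`e_{j-1,r}(λ_B)^r − e_{j,r}(λ_B)^r ≥ ζ_j` (for any similitude `h` of ratio `diam B` used to
define `λ_B`). In particular this applies to the balls `B(c_σ,(7/8)m^{-k})`, `E_σ`,
`B(c_σ,(9/8)m^{-k})` and `B(c_σ,(5/2)m^{-k})` for `σ ∈ Ω_k`. -/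
theorem stmt10 {E : Type*} [NormedAddCommGroup E] [NormedSpace ℝ E]
    [MeasurableSpace E] [BorelSpace E] [FiniteDimensional ℝ E]
    (r : ℝ) (hr : 0 < r)
    (μ : MeasureTheory.Measure E) [MeasureTheory.IsProbabilityMeasure μ]
    (s0 ε0 C1 C2 : ℝ) (hμ : IsAhlfors μ s0 ε0 C1 C2)
    (m : ℕ) (hm : 2 ≤ m) (k0 : ℕ)
    (hk0 : 2 * ((m : ℝ) ^ k0)⁻¹ < ε0)
    (hk0min : ∀ j : ℕ, 2 * ((m : ℝ) ^ j)⁻¹ < ε0 → k0 ≤ j)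
    (j : ℕ) (hj : 2 ≤ j) :
    ∃ ζ : ℝ, 0 < ζ ∧ ∀ k : ℕ, k0 ≤ k → ∀ x ∈ msupp μ, ∀ ρ : ℝ,
      (7 / 8 : ℝ) * ((m : ℝ) ^ k)⁻¹ ≤ ρ → ρ ≤ (5 / 2 : ℝ) * ((m : ℝ) ^ k)⁻¹ →
      ∀ h : E → E, IsSimilitude h (Metric.diam (Metric.closedBall x ρ)) →
        ζ ≤ quantErrPow (condPull μ (Metric.closedBall x ρ) h) r (j - 1) -
              quantErrPow (condPull μ (Metric.closedBall x ρ) h) r j :=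
  stmt10_general r hr μ s0 ε0 C1 C2 hμ m hm k0 hk0 j hj
end
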